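/- In an e-ring, the set P of projections, partially ordered by the order inherited from G and with orthocomplementation p ↦ 1−p, is an orthomodular poset in which the supremum of orthogonal projections p ≤ 1−q is p+q. -/

import Mathlib

/-- An e-ring: an associative unital ring `R` together with a set `E` of effects.
`E⁺` is the additive submonoid generated by `E` (the set of finite sums of effects). -/
structure ERing (R : Type*) [Ring R] where
  E : Set R
  zero_mem : (0:R) ∈ E
  one_mem : (1:R) ∈ E
  compl_mem : ∀ e ∈ E, 1 - e ∈ E
  ax_i : ∀ a ∈ AddSubmonoid.closure E, -a ∈ AddSubmonoid.closure E → a = 0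
  ax_ii : ∀ a ∈ AddSubmonoid.closure E, 1 - a ∈ AddSubmonoid.closure E → a ∈ E
  ax_iii : ∀ a ∈ AddSubmonoid.closure E, ∀ b ∈ AddSubmonoid.closure E,
    a * b = b * a → a * b ∈ AddSubmonoid.closure E
  ax_iv : ∀ a ∈ AddSubmonoid.closure E, ∀ b ∈ AddSubmonoid.closure E,
    a * b * a ∈ AddSubmonoid.closure E
  ax_v : ∀ a ∈ AddSubmonoid.closure E, ∀ b ∈ AddSubmonoid.closure E,
    a * b * a = 0 → a * b = 0 ∧ b * a = 0
  ax_vi : ∀ a ∈ AddSubmonoid.closure E, ∀ b ∈ AddSubmonoid.closure E,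
    (a - b) * (a - b) ∈ AddSubmonoid.closure E

namespace ERing

variable {R : Type*} [Ring R]

/-- The positive cone `E⁺`: all finite sums of effects. -/
def Ep (S : ERing R) : Set R := (AddSubmonoid.closure S.E : Set R)

/-- The directed group `G = E⁺ − E⁺` (as a subset of `R`). -/
def G (S : ERing R) : Set R := {x | ∃ a ∈ S.Ep, ∃ b ∈ S.Ep, x = a - b}

/-- The partial order with positive cone `E⁺`: `g ≤ h` iff `h − g ∈ E⁺`. -/
def le (S : ERing R) (g h : R) : Prop := h - g ∈ S.Ep

/-- The set of projections: idempotent elements of `G`. -/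
def P (S : ERing R) : Set R := {p | p ∈ S.G ∧ p * p = p}

end ERing

/-!
Every projection lies in the cone `E⁺`: writing `p = a - b` with `a, b ∈ E⁺`, axiom (vi) puts
`(a - b)² = p` in `E⁺`. Orthogonality `p ≤ 1 - q` forces `pq = qp = 0`: both `pqp` and
`p(1 - q - p)p = -pqp` lie in `E⁺`, so `pqp = 0` by (i), and (v) gives `pq = qp = 0`. Hence for
projections `p ≤ q` iff `pq = qp = p` (the converse because `q - p` is then an idempotent of `G`),
and all order statements about `P` become identities between products of projections.
-/

namespace ERing

variable {R : Type*} [Ring R] (S : ERing R)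

lemma zero_mem_Ep : (0 : R) ∈ S.Ep := (AddSubmonoid.closure S.E).zero_mem

lemma one_mem_Ep : (1 : R) ∈ S.Ep := AddSubmonoid.subset_closure S.one_mem

lemma add_mem_Ep {a b : R} (ha : a ∈ S.Ep) (hb : b ∈ S.Ep) : a + b ∈ S.Ep :=
  (AddSubmonoid.closure S.E).add_mem ha hb

lemma mem_G_of_mem_Ep {a : R} (ha : a ∈ S.Ep) : a ∈ S.G :=
  ⟨a, ha, 0, S.zero_mem_Ep, (sub_zero a).symm⟩

lemma sub_mem_G {x y : R} (hx : x ∈ S.G) (hy : y ∈ S.G) : x - y ∈ S.G := by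
  obtain ⟨a, ha, b, hb, rfl⟩ := hx
  obtain ⟨c, hc, d, hd, rfl⟩ := hy
  exact ⟨a + d, S.add_mem_Ep ha hd, b + c, S.add_mem_Ep hb hc, by abel⟩

lemma mem_Ep_of_mem_G_of_isIdempotentElem {x : R} (hx : x ∈ S.G) (hxx : IsIdempotentElem x) :
    x ∈ S.Ep := by
  obtain ⟨a, ha, b, hb, rfl⟩ := hx
  have hsq : (a - b) * (a - b) ∈ S.Ep := S.ax_vi a ha b hb
  rwa [hxx.eq] at hsq

lemma mem_Ep_of_mem_P {p : R} (hp : p ∈ S.P) : p ∈ S.Ep :=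
  S.mem_Ep_of_mem_G_of_isIdempotentElem hp.1 hp.2

lemma zero_mem_P : (0 : R) ∈ S.P := ⟨S.mem_G_of_mem_Ep S.zero_mem_Ep, mul_zero 0⟩

lemma one_mem_P : (1 : R) ∈ S.P := ⟨S.mem_G_of_mem_Ep S.one_mem_Ep, mul_one 1⟩

lemma one_sub_mem_P {p : R} (hp : p ∈ S.P) : 1 - p ∈ S.P :=
  ⟨S.sub_mem_G (S.mem_G_of_mem_Ep S.one_mem_Ep) hp.1, IsIdempotentElem.one_sub hp.2⟩

lemma add_mem_P {p q : R} (hp : p ∈ S.P) (hq : q ∈ S.P) (hpq : p * q = 0) (hqp : q * p = 0) :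
    p + q ∈ S.P :=
  ⟨S.mem_G_of_mem_Ep (S.add_mem_Ep (S.mem_Ep_of_mem_P hp) (S.mem_Ep_of_mem_P hq)),
    IsIdempotentElem.add hp.2 hq.2 (by rw [hpq, hqp, add_zero])⟩

lemma sub_mem_P {p q : R} (hp : p ∈ S.P) (hq : q ∈ S.P) (hpq : p * q = p) (hqp : q * p = p) :
    q - p ∈ S.P :=
  ⟨S.sub_mem_G hq.1 hp.1, IsIdempotentElem.sub hp.2 hq.2 hpq hqp⟩

lemma one_sub_le_one_sub {p q : R} (h : S.le p q) : S.le (1 - q) (1 - p) := by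
  rwa [ERing.le, sub_sub_sub_cancel_left]

lemma mul_eq_zero_of_le_one_sub {p q : R} (hp : p ∈ S.P) (hq : q ∈ S.Ep) (h : S.le p (1 - q)) :
    p * q = 0 ∧ q * p = 0 := by
  have hpE := S.mem_Ep_of_mem_P hp
  have hneg : -(p * q * p) ∈ S.Ep := by
    have e : p * (1 - q - p) * p = -(p * q * p) := by
      simp only [mul_sub, sub_mul, mul_one, hp.2]
      abel
    exact e ▸ S.ax_iv p hpE _ h
  exact S.ax_v p hpE q hq (S.ax_i _ (S.ax_iv p hpE q hq) hneg)

lemma mul_eq_left_of_le {p q : R} (hp : p ∈ S.P) (hq : q ∈ S.P) (h : S.le p q) :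
    p * q = p ∧ q * p = p := by
  have h' : S.le p (1 - (1 - q)) := by rwa [sub_sub_cancel]
  obtain ⟨hpq, hqp⟩ :=
    S.mul_eq_zero_of_le_one_sub hp (S.mem_Ep_of_mem_P (S.one_sub_mem_P hq)) h'
  rw [mul_sub, mul_one, sub_eq_zero] at hpq
  rw [sub_mul, one_mul, sub_eq_zero] at hqp
  exact ⟨hpq.symm, hqp.symm⟩

lemma le_iff_mul_eq_left {p q : R} (hp : p ∈ S.P) (hq : q ∈ S.P) :
    S.le p q ↔ p * q = p ∧ q * p = p :=
  ⟨S.mul_eq_left_of_le hp hq, fun ⟨hpq, hqp⟩ => S.mem_Ep_of_mem_P (S.sub_mem_P hp hq hpq hqp)⟩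

lemma add_le_of_le_of_le {p q r : R} (hp : p ∈ S.P) (hq : q ∈ S.P) (hr : r ∈ S.P)
    (hpq : p * q = 0) (hqp : q * p = 0) (hpr : S.le p r) (hqr : S.le q r) : S.le (p + q) r := by
  obtain ⟨hpr₁, hpr₂⟩ := S.mul_eq_left_of_le hp hr hpr
  obtain ⟨hqr₁, hqr₂⟩ := S.mul_eq_left_of_le hq hr hqr
  rw [S.le_iff_mul_eq_left (S.add_mem_P hp hq hpq hqp) hr]
  simp only [add_mul, mul_add, hpr₁, hpr₂, hqr₁, hqr₂, and_self]

lemma le_sub_of_le_of_le_one_sub {p q r : R} (hp : p ∈ S.P) (hq : q ∈ S.P) (hr : r ∈ S.P)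
    (hpq : p * q = p) (hqp : q * p = p) (hrq : S.le r q) (hrp : S.le r (1 - p)) :
    S.le r (q - p) := by
  obtain ⟨hrq₁, hrq₂⟩ := S.mul_eq_left_of_le hr hq hrq
  obtain ⟨hrp₁, hpr₁⟩ := S.mul_eq_zero_of_le_one_sub hr (S.mem_Ep_of_mem_P hp) hrp
  rw [S.le_iff_mul_eq_left hr (S.sub_mem_P hp hq hpq hqp)]
  simp only [sub_mul, mul_sub, hrq₁, hrq₂, hrp₁, hpr₁, sub_zero, and_self]

end ERing

theorem stmt14 {R : Type*} [Ring R] (S : ERing R) :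
    -- P is a bounded poset (the order is the restriction of that of G, hence a
    -- partial order by antisymmetry from ax_i):
    ((0 : R) ∈ S.P ∧ (1 : R) ∈ S.P ∧ ∀ p ∈ S.P, S.le 0 p ∧ S.le p 1) ∧
    -- p ↦ 1 − p is an involutive order-reversing orthocomplementation:
    (∀ p ∈ S.P, (1 - p) ∈ S.P) ∧
    (∀ p ∈ S.P, 1 - (1 - p) = p) ∧
    (∀ p ∈ S.P, ∀ q ∈ S.P, S.le p q → S.le (1 - q) (1 - p)) ∧
    -- if p ≤ 1 − q, then p + q is the supremum of p and q in P:
    (∀ p ∈ S.P, ∀ q ∈ S.P, S.le p (1 - q) →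
      p + q ∈ S.P ∧ S.le p (p + q) ∧ S.le q (p + q) ∧
      ∀ r ∈ S.P, S.le p r → S.le q r → S.le (p + q) r) ∧
    -- the orthomodular law: if p ≤ q then q − p = q ∧ (1 − p) in P and
    -- q = p + (q − p) = p ∨ (q ∧ (1 − p)):
    (∀ p ∈ S.P, ∀ q ∈ S.P, S.le p q →
      q - p ∈ S.P ∧ q = p + (q - p) ∧
      S.le (q - p) q ∧ S.le (q - p) (1 - p) ∧
      ∀ r ∈ S.P, S.le r q → S.le r (1 - p) → S.le r (q - p)) := by
  refine ⟨⟨S.zero_mem_P, S.one_mem_P, fun p hp => ?_⟩, fun p hp => S.one_sub_mem_P hp,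
    fun p _ => sub_sub_cancel 1 p, fun p _ q _ h => S.one_sub_le_one_sub h, ?_, ?_⟩
  · simp [S.le_iff_mul_eq_left S.zero_mem_P hp, S.le_iff_mul_eq_left hp S.one_mem_P]
  · intro p hp q hq h
    obtain ⟨hpq, hqp⟩ := S.mul_eq_zero_of_le_one_sub hp (S.mem_Ep_of_mem_P hq) h
    have hsum := S.add_mem_P hp hq hpq hqp
    refine ⟨hsum, ?_, ?_, fun r hr => S.add_le_of_le_of_le hp hq hr hpq hqp⟩
    · simp [S.le_iff_mul_eq_left hp hsum, mul_add, add_mul, hp.2, hpq, hqp]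
    · simp [S.le_iff_mul_eq_left hq hsum, mul_add, add_mul, hq.2, hpq, hqp]
  · intro p hp q hq h
    obtain ⟨hpq, hqp⟩ := S.mul_eq_left_of_le hp hq h
    have hdiff := S.sub_mem_P hp hq hpq hqp
    refine ⟨hdiff, (add_sub_cancel p q).symm, ?_, ?_,
      fun r hr => S.le_sub_of_le_of_le_one_sub hp hq hr hpq hqp⟩
    · simp [S.le_iff_mul_eq_left hdiff hq, mul_sub, sub_mul, hq.2, hpq, hqp]
    · simp [S.le_iff_mul_eq_left hdiff (S.one_sub_mem_P hp), mul_sub, sub_mul, hp.2,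
        hpq, hqp]
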